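/- Let γ be a root of an irreducible polynomial of degree n/k > 2 over F_{q^k} and let f be a scattered q-polynomial over F_{q^k}. Then V_{f,γ} = {u + f(u)γ : u ∈ F_{q^k}} is a Sidon space in F_{q^n}. -/

import Mathlib

/-- The multiplicative coset `a·F_q` inside `L`. -/
def qcoset (K : Type*) {L : Type*} [Field K] [Field L] [Algebra K L] (a : L) : Set L :=
  Set.range fun x : K => algebraMap K L x * a

/-- `V ⊆ L` is a Sidon space (as a set): for nonzero `a,b,c,d ∈ V` with `ab = cd`
we have `{aF_q, bF_q} = {cF_q, dF_q}`. -/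
def IsSidonSet (K : Type*) {L : Type*} [Field K] [Field L] [Algebra K L] (V : Set L) : Prop :=
  ∀ a ∈ V, ∀ b ∈ V, ∀ c ∈ V, ∀ d ∈ V,
    a ≠ 0 → b ≠ 0 → c ≠ 0 → d ≠ 0 → a * b = c * d →
      ({qcoset K a, qcoset K b} : Set (Set L)) = {qcoset K c, qcoset K d}

/-- `f` is scattered: `f(a)/a = f(b)/b` for nonzero `a,b` forces `F_q`-proportionality. -/
def IsScattered (K : Type*) {M : Type*} [Field K] [Field M] [Algebra K M] (f : M → M) : Prop :=
  ∀ a b : M, a ≠ 0 → b ≠ 0 → f a * b = f b * a → ∃ c : K, b = algebraMap K M c * a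

/-- `f` is a Sidon space polynomial: `S_{x₀,f} ∩ S_{x₁,f} = F_q` for all
non-`F_q`-proportional `x₀, x₁`. -/
def IsSidonPoly (K : Type*) {M : Type*} [Field K] [Field M] [Algebra K M] (f : M → M) : Prop :=
  ∀ x₀ x₁ : M,
    ¬ (∃ c : K, x₁ = algebraMap K M c * x₀ ∨ x₀ = algebraMap K M c * x₁) →
    {l : M | f (l * x₀) = l * f x₀} ∩ {l : M | f (l * x₁) = l * f x₁}
      = Set.range (algebraMap K M)

open Polynomial in
lemma indep3 {M L : Type*} [Field M] [Field L] [Algebra M L] [Fintype L] [Fintype M] (γ : L)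
    (hγ : Algebra.adjoin M {γ} = ⊤) (hdeg : 2 < Module.finrank M L) (c₀ c₁ c₂ : M)
    (h : algebraMap M L c₀ + algebraMap M L c₁ * γ + algebraMap M L c₂ * γ ^ 2 = 0) :
    c₀ = 0 ∧ c₁ = 0 ∧ c₂ = 0 := by
  have hint : IsIntegral M γ := IsIntegral.of_finite M γ
  have hmd : 2 < (minpoly M γ).natDegree := by
    have e : (Algebra.adjoin M {γ}) ≃ₐ[M] L :=
      (Subalgebra.equivOfEq _ ⊤ hγ).trans Subalgebra.topEquiv
    have h1 : Module.finrank M (Algebra.adjoin M {γ}) = Module.finrank M L :=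
      e.toLinearEquiv.finrank_eq
    have h2 := (Algebra.adjoin.powerBasis hint).finrank
    rw [Algebra.adjoin.powerBasis_dim] at h2
    omega
  set p : M[X] := C c₂ * X ^ 2 + C c₁ * X + C c₀ with hp
  have hev : aeval γ p = 0 := by
    simp only [hp, map_add, map_mul, map_pow, aeval_C, aeval_X]
    linear_combination h
  have hp0 : p = 0 := by
    by_contra hne
    have h1 : (minpoly M γ).degree ≤ p.degree := minpoly.degree_le_of_ne_zero M γ hne hev
    have h2 : (minpoly M γ).natDegree ≤ p.natDegree := natDegree_le_natDegree h1
    have h3 : p.natDegree ≤ 2 := natDegree_quadratic_le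
    omega
  refine ⟨?_, ?_, ?_⟩
  · have := congrArg (fun q => coeff q 0) hp0; simpa [hp] using this
  · have := congrArg (fun q => coeff q 1) hp0; simpa [hp] using this
  · have := congrArg (fun q => coeff q 2) hp0; simpa [hp] using this

lemma qcoset_mul_left {K L : Type*} [Field K] [Field L] [Algebra K L] {c : K} (hc : c ≠ 0)
    (a : L) : qcoset K (algebraMap K L c * a) = qcoset K a := by
  ext x
  simp only [qcoset, Set.mem_range]
  constructor
  · rintro ⟨y, rfl⟩
    exact ⟨y * c, by rw [map_mul]; ring⟩
  · rintro ⟨y, rfl⟩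
    refine ⟨y * c⁻¹, ?_⟩
    rw [map_mul, map_inv₀]
    have : algebraMap K L c ≠ 0 := by
      simpa using hc
    field_simp

/-- for `γ` of degree `> 2` over `F_{q^k}` and `f` scattered, `V_{f,γ}` is a
Sidon space. -/
theorem stmt_7 {K M L : Type*} [Field K] [Field M] [Field L]
    [Algebra K M] [Algebra M L] [Algebra K L] [IsScalarTower K M L]
    [Fintype K] [Fintype M] [Fintype L]
    (γ : L) (hγ : Algebra.adjoin M {γ} = ⊤) (hdeg : 2 < Module.finrank M L)
    (f : M →ₗ[K] M) (hf : IsScattered K (⇑f)) :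
    IsSidonSet K {x : L | ∃ u : M, x = algebraMap M L u + algebraMap M L (f u) * γ} := by
  intro a ha b hb c hc d hd ha0 hb0 hc0 hd0 heq
  obtain ⟨u₀, rfl⟩ := ha
  obtain ⟨u₁, rfl⟩ := hb
  obtain ⟨u₂, rfl⟩ := hc
  obtain ⟨u₃, rfl⟩ := hd
  have hu₀ : u₀ ≠ 0 := by rintro rfl; simp at ha0
  have hu₁ : u₁ ≠ 0 := by rintro rfl; simp at hb0
  have hu₂ : u₂ ≠ 0 := by rintro rfl; simp at hc0
  have hu₃ : u₃ ≠ 0 := by rintro rfl; simp at hd0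
  have hmain : algebraMap M L (u₀ * u₁ - u₂ * u₃)
      + algebraMap M L (u₀ * f u₁ + u₁ * f u₀ - u₂ * f u₃ - u₃ * f u₂) * γ
      + algebraMap M L (f u₀ * f u₁ - f u₂ * f u₃) * γ ^ 2 = 0 := by
    simp only [map_sub, map_add, map_mul]
    linear_combination heq
  obtain ⟨E1, E2, E3⟩ := indep3 γ hγ hdeg _ _ _ hmain
  have key : (f u₀ * u₂ - f u₂ * u₀) * (f u₁ * u₂ - f u₂ * u₁) = 0 := by
    linear_combination (f u₂) ^ 2 * E1 - u₂ * f u₂ * E2 + u₂ ^ 2 * E3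
  have hrep : ∀ e : K, e ≠ 0 → ∀ u v : M, v = algebraMap K M e * u →
      qcoset K (algebraMap M L v + algebraMap M L (f v) * γ)
        = qcoset K (algebraMap M L u + algebraMap M L (f u) * γ) := by
    intro e he u v hv
    have hfv : f v = algebraMap K M e * f u := by
      rw [hv, ← Algebra.smul_def, map_smul, Algebra.smul_def]
    rw [hfv, hv, ← qcoset_mul_left (L := L) he
      (algebraMap M L u + algebraMap M L (f u) * γ)]
    rw [map_mul, map_mul, ← IsScalarTower.algebraMap_apply]
    ring
  rcases mul_eq_zero.mp key with h | h
  · obtain ⟨e, he2⟩ := hf u₀ u₂ hu₀ hu₂ (by linear_combination h)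
    have hene : e ≠ 0 := by
      rintro rfl
      rw [map_zero, zero_mul] at he2
      exact hu₂ he2
    have hAe : algebraMap K M e ≠ 0 := by simpa using hene
    have hu₃' : u₃ = algebraMap K M e⁻¹ * u₁ := by
      have h4 : u₀ * (algebraMap K M e * u₃ - u₁) = 0 := by
        linear_combination -E1 - u₃ * he2
      have h5 := sub_eq_zero.mp ((mul_eq_zero.mp h4).resolve_left hu₀)
      rw [map_inv₀]
      field_simp
      linear_combination h5
    rw [hrep e hene u₀ u₂ he2, hrep e⁻¹ (inv_ne_zero hene) u₁ u₃ hu₃']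
  · obtain ⟨e, he2⟩ := hf u₁ u₂ hu₁ hu₂ (by linear_combination h)
    have hene : e ≠ 0 := by
      rintro rfl
      rw [map_zero, zero_mul] at he2
      exact hu₂ he2
    have hAe : algebraMap K M e ≠ 0 := by simpa using hene
    have hu₃' : u₃ = algebraMap K M e⁻¹ * u₀ := by
      have h4 : u₁ * (algebraMap K M e * u₃ - u₀) = 0 := by
        linear_combination -E1 - u₃ * he2
      have h5 := sub_eq_zero.mp ((mul_eq_zero.mp h4).resolve_left hu₁)
      rw [map_inv₀]
      field_simp
      linear_combination h5
    rw [hrep e hene u₁ u₂ he2, hrep e⁻¹ (inv_ne_zero hene) u₀ u₃ hu₃']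
    exact Set.pair_comm _ _
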